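/- arXiv:2202.06905 — 3 statements merged into one kernel-verified Lean document; each statement's English description precedes it below -/
import Mathlib

section
/- In the ring of germs at a point λ ∈ ℂⁿ of holomorphic functions, an ideal I is cofinite (i.e. the quotient Hol_λ/I is finite-dimensional over ℂ) if and only if there exists m ∈ ℕ₀ such that m_λ^{m+1} ⊆ I, where m_λ is the maximal ideal of germs vanishing at λ. -/
/-!
`Hol` is a local ring with maximal ideal `mz`, residue field `ℂ`, and `mz` is generated by the
coordinate functions `xᵢ - zᵢ` (Hadamard's lemma, from splitting off the constant term of the
power series). For such a local ring the statement is pure commutative algebra: a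
finite-dimensional `Hol ⧸ I` is Artinian, so the image of `mz` in it is nilpotent; conversely
`Hol ⧸ mz ^ n` is finite-dimensional because `mz` is finitely generated.
-/

open Filter

noncomputable instance germComplexAlgebra {α : Type*} (l : Filter α) :
    Algebra ℂ (l.Germ ℂ) :=
  Algebra.ofModule
    (fun c x y => by
      induction x using Filter.Germ.inductionOn with | _ f =>
      induction y using Filter.Germ.inductionOn with | _ g =>
      simp only [← Filter.Germ.coe_smul, ← Filter.Germ.coe_mul]
      congr 1
      exact smul_mul_assoc c f g)
    (fun c x y => by
      induction x using Filter.Germ.inductionOn with | _ f =>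
      induction y using Filter.Germ.inductionOn with | _ g =>
      simp only [← Filter.Germ.coe_smul, ← Filter.Germ.coe_mul]
      congr 1
      exact mul_smul_comm c f g)

open Topology IsLocalRing

theorem Ideal.moduleFinite_quotient_pow {k R : Type*} [CommRing k] [CommRing R] [Algebra k R]
    {I : Ideal R} (hI : I.FG) [Module.Finite k (R ⧸ I)] :
    ∀ n : ℕ, Module.Finite k (R ⧸ I ^ n)
  | 0 => by
    rw [pow_zero, Ideal.one_eq_top]
    infer_instance
  | n + 1 => by
    have hle : I ^ (n + 1) ≤ I := Ideal.pow_le_self n.succ_ne_zero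
    have hker : RingHom.ker (Ideal.Quotient.factorₐ k hle) = I.map (Ideal.Quotient.mk _) :=
      Ideal.Quotient.factor_ker hle
    refine Module.finite_of_surjective_of_ker_le_nilradical (Ideal.Quotient.factorₐ k hle)
      (Ideal.Quotient.factor_surjective hle) ?_ (hker ▸ hI.map _)
    rw [hker, ← (hI.map _).isNilpotent_iff_le_nilradical]
    refine ⟨n + 1, ?_⟩
    rw [← Ideal.map_pow, Ideal.zero_eq_bot, Ideal.map_mk_eq_bot_of_le le_rfl]

theorem IsLocalRing.finiteDimensional_quotient_iff_exists_pow_le {k R : Type*} [Field k]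
    [CommRing R] [IsLocalRing R] [Algebra k R] (hfg : (maximalIdeal R).FG)
    (hres : FiniteDimensional k (R ⧸ maximalIdeal R)) (I : Ideal R) :
    FiniteDimensional k (R ⧸ I) ↔ ∃ n, maximalIdeal R ^ n ≤ I := by
  refine ⟨fun _ ↦ ?_, fun ⟨n, hn⟩ ↦ ?_⟩
  · have := IsArtinianRing.of_finite k (R ⧸ I)
    exact exists_maximalIdeal_pow_le_of_isArtinianRing_quotient I
  · have := Ideal.moduleFinite_quotient_pow (k := k) hfg n
    exact .of_surjective (Ideal.Quotient.factorₐ k hn).toLinearMap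
      (Ideal.Quotient.factor_surjective hn)

section Hadamard

variable {𝕜 E F : Type*} [NontriviallyNormedField 𝕜] [NormedAddCommGroup E]
  [NormedSpace 𝕜 E] [NormedAddCommGroup F] [NormedSpace 𝕜 F]

theorem FormalMultilinearSeries.shift_unshift (p : FormalMultilinearSeries 𝕜 E F) :
    p.shift.unshift (p 0 0) = p := by
  ext (_ | n) v
  · simp [FormalMultilinearSeries.unshift, Subsingleton.elim v 0]
  · simp [FormalMultilinearSeries.unshift, FormalMultilinearSeries.shift]

theorem AnalyticAt.exists_eventuallyEq_add_apply_sub [CompleteSpace F] {g : E → F} {z : E}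
    (hg : AnalyticAt 𝕜 g z) :
    ∃ h : E → E →L[𝕜] F, AnalyticAt 𝕜 h z ∧
      ∀ᶠ x in 𝓝 z, g x = g z + h x (x - z) := by
  obtain ⟨p, r, hp⟩ := hg
  have hrad : r ≤ p.shift.radius := p.radius_shift ▸ hp.r_le
  have hshift : HasFPowerSeriesOnBall (fun x ↦ p.shift.sum (x - z)) p.shift z r := by
    simpa using
      ((p.shift.hasFPowerSeriesOnBall (hp.r_pos.trans_le hrad)).mono hp.r_pos hrad).comp_sub z
  refine ⟨_, hshift.analyticAt, ?_⟩
  have hseries : p.shift.unshift (g z) = p := by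
    rw [← hp.hasFPowerSeriesAt.coeff_zero 0, p.shift_unshift]
  have hunshift := hseries ▸ hshift.unshift (z := g z)
  filter_upwards [hp.eventually_hasSum_sub, hunshift.eventually_hasSum_sub] with x h₁ h₂
  exact h₁.unique h₂

end Hadamard

section AnalyticGerms

variable {E : Type*} [NormedAddCommGroup E] [NormedSpace ℂ E] {z : E}

def IsAnalyticGermAlgebra (Hol : Subalgebra ℂ ((𝓝 z).Germ ℂ)) : Prop :=
  ∀ f : (𝓝 z).Germ ℂ, f ∈ Hol ↔ ∃ g : E → ℂ, AnalyticAt ℂ g z ∧ f = ↑g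

def IsVanishingIdeal {Hol : Subalgebra ℂ ((𝓝 z).Germ ℂ)} (mz : Ideal Hol) : Prop :=
  ∀ f : Hol, f ∈ mz ↔ ∃ g : E → ℂ, AnalyticAt ℂ g z ∧ f.1 = ↑g ∧ g z = 0

variable {Hol : Subalgebra ℂ ((𝓝 z).Germ ℂ)} {mz : Ideal Hol}

theorem IsVanishingIdeal.one_notMem (hmz : IsVanishingIdeal mz) : (1 : Hol) ∉ mz := by
  intro h1
  obtain ⟨g, -, hg1, hgz⟩ := (hmz 1).1 h1
  have : (1 : E → ℂ) z = g z := (Germ.coe_eq.1 hg1).eq_of_nhds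
  simp [hgz] at this

theorem IsAnalyticGermAlgebra.isUnit_of_notMem (hHol : IsAnalyticGermAlgebra Hol)
    (hmz : IsVanishingIdeal mz) {f : Hol} (hf : f ∉ mz) : IsUnit f := by
  obtain ⟨g, hg, hfg⟩ := (hHol f).1 f.2
  have hgz : g z ≠ 0 := fun h0 ↦ hf ((hmz f).2 ⟨g, hg, hfg, h0⟩)
  have hinv : (↑g⁻¹ : (𝓝 z).Germ ℂ) ∈ Hol := (hHol _).2 ⟨_, hg.inv hgz, rfl⟩
  refine .of_mul_eq_one ⟨_, hinv⟩ (Subtype.ext ?_)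
  change f.1 * ↑g⁻¹ = ((1 : E → ℂ) : (𝓝 z).Germ ℂ)
  rw [hfg, ← Germ.coe_mul]
  exact Germ.coe_eq.2 <| (hg.continuousAt.eventually_ne hgz).mono fun x hx ↦ mul_inv_cancel₀ hx

theorem IsAnalyticGermAlgebra.mem_iff_not_isUnit (hHol : IsAnalyticGermAlgebra Hol)
    (hmz : IsVanishingIdeal mz) (f : Hol) : f ∈ mz ↔ ¬IsUnit f :=
  ⟨fun hf hu ↦ hmz.one_notMem (mz.eq_top_of_isUnit_mem hf hu ▸ Submodule.mem_top),
    not_imp_comm.1 (hHol.isUnit_of_notMem hmz)⟩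

theorem IsAnalyticGermAlgebra.isLocalRing (hHol : IsAnalyticGermAlgebra Hol)
    (hmz : IsVanishingIdeal mz) :    IsLocalRing Hol :=
  have : Nontrivial Hol := ⟨0, 1, fun h ↦ hmz.one_notMem (h ▸ mz.zero_mem)⟩
  .of_nonunits_add fun a b ha hb ↦ by
    simp only [mem_nonunits_iff, ← hHol.mem_iff_not_isUnit hmz] at ha hb ⊢
    exact mz.add_mem ha hb

theorem IsAnalyticGermAlgebra.maximalIdeal_eq (hHol : IsAnalyticGermAlgebra Hol)
    (hmz : IsVanishingIdeal mz) :    @maximalIdeal Hol _ (hHol.isLocalRing hmz) = mz := by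
  ext f
  rw [@mem_maximalIdeal, mem_nonunits_iff, hHol.mem_iff_not_isUnit hmz]

theorem IsAnalyticGermAlgebra.exists_sub_algebraMap_mem (hHol : IsAnalyticGermAlgebra Hol)
    (hmz : IsVanishingIdeal mz) (f : Hol) : ∃ c : ℂ, f - algebraMap ℂ Hol c ∈ mz := by
  obtain ⟨g, hg, hfg⟩ := (hHol f).1 f.2
  refine ⟨g z, (hmz _).2 ⟨fun x ↦ g x - g z, hg.sub analyticAt_const, ?_, sub_self _⟩⟩
  change f.1 - algebraMap ℂ _ (g z) = _
  rw [hfg, Algebra.algebraMap_eq_smul_one, ← Germ.coe_one, ← Germ.coe_smul, ← Germ.coe_sub]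
  congr 1
  ext x
  simp

theorem IsAnalyticGermAlgebra.finiteDimensional_quotient (hHol : IsAnalyticGermAlgebra Hol)
    (hmz : IsVanishingIdeal mz) : FiniteDimensional ℂ (Hol ⧸ mz) := by
  refine .of_surjective (Algebra.linearMap ℂ (Hol ⧸ mz)) fun q ↦ ?_
  obtain ⟨f, rfl⟩ := Ideal.Quotient.mk_surjective q
  obtain ⟨c, hc⟩ := hHol.exists_sub_algebraMap_mem hmz f
  exact ⟨c, (Ideal.Quotient.eq.2 hc).symm⟩

end AnalyticGerms

theorem IsAnalyticGermAlgebra.fg_of_isVanishingIdeal {n : ℕ} {z : Fin n → ℂ}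
    {Hol : Subalgebra ℂ ((𝓝 z).Germ ℂ)} {mz : Ideal Hol}
    (hHol : IsAnalyticGermAlgebra Hol) (hmz : IsVanishingIdeal mz) : mz.FG := by
  have hcoord (i : Fin n) : AnalyticAt ℂ (fun x : Fin n → ℂ ↦ x i - z i) z :=
    ((ContinuousLinearMap.proj (R := ℂ) (φ := fun _ : Fin n ↦ ℂ) i).analyticAt z).sub
      analyticAt_const
  let W (i : Fin n) : Hol := ⟨_, (hHol _).2 ⟨_, hcoord i, rfl⟩⟩
  refine Submodule.fg_def.2 ⟨Set.range W, Set.finite_range W,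
    le_antisymm (Ideal.span_le.2 ?_) fun f hf ↦ ?_⟩
  · rintro _ ⟨i, rfl⟩
    exact (hmz _).2 ⟨_, hcoord i, rfl, sub_self _⟩
  obtain ⟨g, hg, hfg, hgz⟩ := (hmz f).1 hf
  obtain ⟨h, hh, hgh⟩ := hg.exists_eventuallyEq_add_apply_sub
  have hH (i : Fin n) : AnalyticAt ℂ (fun x ↦ h x (Pi.single i 1)) z :=
    ((ContinuousLinearMap.apply ℂ ℂ (Pi.single i 1 : Fin n → ℂ)).analyticAt (h z)).comp hh
  let H (i : Fin n) : Hol := ⟨_, (hHol _).2 ⟨_, hH i, rfl⟩⟩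
  have hexpand : g =ᶠ[𝓝 z] ∑ i, (fun x ↦ x i - z i) * fun x ↦ h x (Pi.single i 1) := by
    filter_upwards [hgh] with x hx
    conv_rhs => rw [Finset.sum_apply]
    rw [hx, hgz, zero_add, pi_eq_sum_univ' (x - z)]
    simp
  have hf_eq : f = ∑ i, W i * H i := by
    apply Subtype.ext
    rw [hfg, Germ.coe_eq.2 hexpand, ← Germ.coe_coeRingHom, map_sum]
    simp [W, H]
  rw [hf_eq]
  exact Ideal.sum_mem _ fun i _ ↦ Ideal.mul_mem_right _ _ (Ideal.subset_span ⟨i, rfl⟩)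

/-- In the local ring `Hol_λ` of germs at a point `λ ∈ ℂⁿ` of holomorphic
functions, an ideal `I` is cofinite (i.e. `Hol_λ ⧸ I` is finite-dimensional over `ℂ`) if and
only if there exists `m ∈ ℕ` such that `m_λ^(m+1) ⊆ I`, where `m_λ` is the maximal ideal of
germs vanishing at `λ`. -/
theorem cofinite_ideal_iff_contains_power_of_maximal_ideal
    (n : ℕ) (z : Fin n → ℂ)
    (Hol : Subalgebra ℂ ((nhds z).Germ ℂ))
    (hHol : ∀ f : (nhds z).Germ ℂ,
      f ∈ Hol ↔ ∃ g : (Fin n → ℂ) → ℂ, AnalyticAt ℂ g z ∧ f = ↑g)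
    (mz : Ideal Hol)
    (hmz : ∀ f : Hol, f ∈ mz ↔ ∃ g : (Fin n → ℂ) → ℂ,
      AnalyticAt ℂ g z ∧ f.1 = ↑g ∧ g z = 0)
    (I : Ideal Hol) :
    FiniteDimensional ℂ (Hol ⧸ I) ↔ ∃ m : ℕ, mz ^ (m + 1) ≤ I := by
  have := IsAnalyticGermAlgebra.isLocalRing hHol hmz
  have hmax : maximalIdeal Hol = mz := IsAnalyticGermAlgebra.maximalIdeal_eq hHol hmz
  have hfg := IsAnalyticGermAlgebra.fg_of_isVanishingIdeal hHol hmz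
  have hres := IsAnalyticGermAlgebra.finiteDimensional_quotient hHol hmz
  rw [finiteDimensional_quotient_iff_exists_pow_le (hmax ▸ hfg) (hmax ▸ hres), hmax]
  exact ⟨fun ⟨k, hk⟩ ↦ ⟨k, (Ideal.pow_le_pow_right k.le_succ).trans hk⟩,
    fun ⟨m, hm⟩ ↦ ⟨m + 1, hm⟩⟩
end

section
/- Symbol of an invariant differential operator on the exponential functions: if Q is a G-invariant linear differential operator from sections of 𝔼_{τ̃} to sections of 𝔼_{γ̃}, then Q e^τ_{λ,k} = (Q e^τ_{λ,1})(1) ∘ e^γ_{λ,k} for all λ ∈ 𝔞*_ℂ and k ∈ K; in particular applying Q to e^τ_{λ,k} multiplies it by a fixed endomorphism-valued factor independent of k and g. -/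
/-!
Write `e_k = e^τ_{λ,k}`. Since `e_k` is the left translate of `e_1` by `k⁻¹`, invariance of `Q`
reduces everything to `Q e_1`. Decompose `h⁻¹ = κ x m` with `κ ∈ K`, `x ∈ A`, `m ∈ N`, so that
`h = (x m)⁻¹ κ⁻¹`. Because `N` is normalised by `A`, left translation by `(x m)⁻¹` multiplies `e_1`
by the character value `χ x`; hence `(Q e_1)((x m)⁻¹) = χ x · (Q e_1)(1)`, and right
`K`-equivariance of `Q e_1` contributes the factor `γ(κ)⁻¹`. Together these form `e^γ_{λ,1}(h)`.
-/

section

variable {G : Type*} [Group G]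

structure IsIwasawaDecomposition (K A N : Subgroup G) (κ a n : G → G) : Prop where
  κ_mem : ∀ g, κ g ∈ K
  a_mem : ∀ g, a g ∈ A
  n_mem : ∀ g, n g ∈ N
  eq_mul : ∀ g, g = κ g * a g * n g
  unique : ∀ g k x m, k ∈ K → x ∈ A → m ∈ N → g = k * x * m →
    k = κ g ∧ x = a g ∧ m = n g
  conj_mem : ∀ x ∈ A, ∀ m ∈ N, x * m * x⁻¹ ∈ N

namespace IsIwasawaDecomposition

variable {K A N : Subgroup G} {κ a n : G → G}

theorem mul_left_of_mem (hI : IsIwasawaDecomposition K A N κ a n) {k : G} (hk : k ∈ K)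
    (g : G) : κ (k * g) = k * κ g ∧ a (k * g) = a g := by
  obtain ⟨hκ, ha, -⟩ := hI.unique (k * g) (k * κ g) (a g) (n g)
    (K.mul_mem hk (hI.κ_mem g)) (hI.a_mem g) (hI.n_mem g)
    (by conv_lhs => rw [hI.eq_mul g]
        group)
  exact ⟨hκ.symm, ha.symm⟩

theorem mul_mul_right_of_mem (hI : IsIwasawaDecomposition K A N κ a n) (g : G) {x m : G}
    (hx : x ∈ A) (hm : m ∈ N) : κ (g * x * m) = κ g ∧ a (g * x * m) = a g * x := by
  have hconj : x⁻¹ * n g * x ∈ N := by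
    simpa using hI.conj_mem x⁻¹ (A.inv_mem hx) (n g) (hI.n_mem g)
  obtain ⟨hκ, ha, -⟩ := hI.unique (g * x * m) (κ g) (a g * x) (x⁻¹ * n g * x * m)
    (hI.κ_mem g) (A.mul_mem (hI.a_mem g) hx) (N.mul_mem hconj hm)
    (by conv_lhs => rw [hI.eq_mul g]
        group)
  exact ⟨hκ.symm, ha.symm⟩

end IsIwasawaDecomposition

section ExpFunction

variable {E : Type*} [AddCommGroup E] [Module ℂ E]

/-- `e^ρ_{λ,k}(g)`, with `χ` standing for the character `x ↦ x^{-(λ+ρ)}` of `A`. -/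
def expFunction (κ a : G → G) (χ : G → ℂ) (ρ : G →* (Module.End ℂ E)ˣ) (k g : G) :
    Module.End ℂ E :=
  χ (a (g⁻¹ * k)) • ((ρ (κ (g⁻¹ * k)))⁻¹ : (Module.End ℂ E)ˣ)

variable {κ a : G → G} {χ : G → ℂ} {ρ : G →* (Module.End ℂ E)ˣ}

theorem expFunction_eq_one_inv_mul (k g : G) :
    expFunction κ a χ ρ k g = expFunction κ a χ ρ 1 (k⁻¹ * g) := by
  simp [expFunction]

theorem expFunction_one_mul_right_of_mem {K A N : Subgroup G} {n : G → G}
    (hI : IsIwasawaDecomposition K A N κ a n) {k : G} (hk : k ∈ K) (g : G) :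
    expFunction κ a χ ρ 1 (g * k) = expFunction κ a χ ρ 1 g * (ρ k : Module.End ℂ E) := by
  obtain ⟨hκ, ha⟩ := hI.mul_left_of_mem (K.inv_mem hk) g⁻¹
  simp only [expFunction, mul_one, mul_inv_rev, hκ, ha, map_mul, map_inv, inv_inv,
    Units.val_mul, smul_mul_assoc]

theorem expFunction_one_inv_mul_left {K A N : Subgroup G} {n : G → G}
    (hI : IsIwasawaDecomposition K A N κ a n) (hχ : ∀ x ∈ A, ∀ y ∈ A, χ (x * y) = χ x * χ y)
    {x m : G} (hx : x ∈ A) (hm : m ∈ N) :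
    (fun g => expFunction κ a χ ρ 1 ((x * m)⁻¹ * g)) = χ x • expFunction κ a χ ρ 1 := by
  funext g
  obtain ⟨hκ, ha⟩ := hI.mul_mul_right_of_mem g⁻¹ hx hm
  simp only [expFunction, mul_one, mul_inv_rev, inv_inv, ← mul_assoc, hκ, ha,
    hχ _ (hI.a_mem _) _ hx, Pi.smul_apply, smul_smul, mul_comm]

end ExpFunction

section InvariantOperator

variable {E F : Type*} [AddCommGroup E] [Module ℂ E] [AddCommGroup F] [Module ℂ F]

theorem apply_eq_smul_apply_one_of_translate_eq_smul
    (Q : (G → Module.End ℂ E) →ₗ[ℂ] (G → (F →ₗ[ℂ] E)))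
    (hQinv : ∀ (h : G) (f : G → Module.End ℂ E), Q (fun x => f (h * x)) = fun x => Q f (h * x))
    {f : G → Module.End ℂ E} {p : G} {c : ℂ} (hf : (fun x => f (p * x)) = c • f) :
    Q f p = c • Q f 1 := by
  simpa [hf] using (congrFun (hQinv p f) 1).symm

variable {K A N : Subgroup G} {κ a n : G → G} {χ : G → ℂ}
  {τ : G →* (Module.End ℂ E)ˣ} {γ : G →* (Module.End ℂ F)ˣ}

theorem apply_expFunction_one (hI : IsIwasawaDecomposition K A N κ a n)
    (hχ : ∀ x ∈ A, ∀ y ∈ A, χ (x * y) = χ x * χ y)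
    (Q : (G → Module.End ℂ E) →ₗ[ℂ] (G → (F →ₗ[ℂ] E)))
    (hQinv : ∀ (h : G) (f : G → Module.End ℂ E), Q (fun x => f (h * x)) = fun x => Q f (h * x))
    (hQequiv : ∀ f : G → Module.End ℂ E,
      (∀ g, ∀ k ∈ K, f (g * k) = f g * (τ k : Module.End ℂ E)) →
      ∀ g, ∀ k ∈ K, Q f (g * k) = (Q f g) ∘ₗ (γ k : Module.End ℂ F)) (h : G) :
    Q (expFunction κ a χ τ 1) h = Q (expFunction κ a χ τ 1) 1 ∘ₗ expFunction κ a χ γ 1 h := by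
  set e := expFunction κ a χ τ 1
  have hh : h = (a h⁻¹ * n h⁻¹)⁻¹ * (κ h⁻¹)⁻¹ := by
    conv_lhs => rw [← inv_inv h, hI.eq_mul h⁻¹]
    group
  have hQe : Q e (a h⁻¹ * n h⁻¹)⁻¹ = χ (a h⁻¹) • Q e 1 :=
    apply_eq_smul_apply_one_of_translate_eq_smul Q hQinv
      (expFunction_one_inv_mul_left hI hχ (hI.a_mem _) (hI.n_mem _))
  calc Q e h = Q e (a h⁻¹ * n h⁻¹)⁻¹ ∘ₗ (γ (κ h⁻¹)⁻¹ : Module.End ℂ F) := by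
        conv_lhs => rw [hh]
        exact hQequiv e (fun g k hk => expFunction_one_mul_right_of_mem hI hk g) _ _
          (K.inv_mem (hI.κ_mem _))
    _ = Q e 1 ∘ₗ expFunction κ a χ γ 1 h := by
        rw [hQe]
        ext v
        simp [expFunction]

end InvariantOperator

end

/-- **symbol of an invariant differential operator on exponentials.**
If `Q` is a `G`-invariant linear operator from (E_τ-tensored) sections of `𝔼_{τ̃}` to
sections of `𝔼_{γ̃}`, then `Q e^τ_{λ,k} = (Q e^τ_{λ,1})(1) ∘ e^γ_{λ,k}` for all `k ∈ K`;
in particular applying `Q` to `e^τ_{λ,k}` multiplies it by a fixed endomorphism-valued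
factor independent of `k` and `g`.

Setting: `G = KAN`; `Q` commutes with all left translations; sections of `𝔼_{τ̃} ⊗ E_τ`
are modelled as functions `G → End(E_τ)` with right equivariance `f(gk) = f(g) ∘ τ(k)`,
and they are mapped by `Q` to functions `G → Hom(E_γ, E_τ)` with
`(Qf)(gk) = (Qf)(g) ∘ γ(k)`; `e^τ_{λ,k}(g) = τ(κ(g⁻¹k))⁻¹ a(g⁻¹k)^{-(λ+ρ)}` with the
`A`-character `a^{-(λ+ρ)}` modelled by `χ : G → ℂ`, and similarly `e^γ_{λ,k}`. -/
theorem invariant_operator_on_exponential_functions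
    {G Eτ Eγ : Type*} [Group G]
    [AddCommGroup Eτ] [Module ℂ Eτ] [AddCommGroup Eγ] [Module ℂ Eγ]
    (K A N : Subgroup G)
    (κ a n : G → G)
    (hκ : ∀ g, κ g ∈ K) (ha : ∀ g, a g ∈ A) (hn : ∀ g, n g ∈ N)
    (hdec : ∀ g, g = κ g * a g * n g)
    (huniq : ∀ g k x m, k ∈ K → x ∈ A → m ∈ N → g = k * x * m →
      k = κ g ∧ x = a g ∧ m = n g)
    (hnorm : ∀ x ∈ A, ∀ m ∈ N, x * m * x⁻¹ ∈ N)
    (τ : G →* (Module.End ℂ Eτ)ˣ) (γ : G →* (Module.End ℂ Eγ)ˣ)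
    (χ : G → ℂ) (hχ : ∀ x ∈ A, ∀ y ∈ A, χ (x * y) = χ x * χ y)
    (eτ : G → G → Module.End ℂ Eτ)
    (heτ : ∀ k g, eτ k g =
      χ (a (g⁻¹ * k)) • ((τ (κ (g⁻¹ * k)))⁻¹ : (Module.End ℂ Eτ)ˣ))
    (eγ : G → G → Module.End ℂ Eγ)
    (heγ : ∀ k g, eγ k g =
      χ (a (g⁻¹ * k)) • ((γ (κ (g⁻¹ * k)))⁻¹ : (Module.End ℂ Eγ)ˣ))
    (Q : (G → Module.End ℂ Eτ) →ₗ[ℂ] (G → (Eγ →ₗ[ℂ] Eτ)))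
    (hQinv : ∀ (h : G) (f : G → Module.End ℂ Eτ),
      Q (fun x => f (h * x)) = fun x => Q f (h * x))
    (hQequiv : ∀ f : G → Module.End ℂ Eτ,
      (∀ g, ∀ k ∈ K, f (g * k) = f g * (τ k : Module.End ℂ Eτ)) →
      ∀ g, ∀ k ∈ K, Q f (g * k) = (Q f g) ∘ₗ (γ k : Module.End ℂ Eγ)) :
    ∀ k ∈ K, ∀ g : G, Q (eτ k) g = (Q (eτ 1) 1) ∘ₗ (eγ k g) := by
  have hI : IsIwasawaDecomposition K A N κ a n := ⟨hκ, ha, hn, hdec, huniq, hnorm⟩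
  obtain rfl : eτ = expFunction κ a χ τ := funext₂ heτ
  obtain rfl : eγ = expFunction κ a χ γ := funext₂ heγ
  intro k _ g
  have htranslate : expFunction κ a χ τ k = fun x => expFunction κ a χ τ 1 (k⁻¹ * x) :=
    funext (expFunction_eq_one_inv_mul k)
  rw [htranslate, hQinv, expFunction_eq_one_inv_mul k g]
  exact apply_expFunction_one hI hχ Q hQinv hQequiv _
end

section
/- The strong dual of a Fréchet–Montel space is bornological: if E is a Fréchet space that is Montel, then its strong dual E'_β is a bornological locally convex space, i.e., every seminorm on E'_β that is bounded on bounded sets is continuous. -/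
/-
Choose a countable basis `Vₙ` of closed absolutely convex neighbourhoods of `0` and let `Cₙ`
bound `p` on the (bounded) polar `Vₙ°`. With `Uₙ := 2ⁿ Cₙ • Vₙ`, the set `B := ⋂ Uₙ` is bounded,
so `B°` is a neighbourhood of `0` in the strong dual, and it suffices to bound `p` on `B°`.
If `T ∈ B°`, compactness of bounded sets (Heine–Borel) and first countability give `M` with
`|T| ≤ 2` on `U₀ ∩ ⋯ ∩ U_M`. By Hahn–Banach, `T / 2 = ∑ gᵢ` with `gᵢ ∈ Uᵢ°`, and
`p gᵢ ≤ Cᵢ / (2ⁱ Cᵢ) = 2⁻ⁱ`, so `p T ≤ 2 ∑ 2⁻ⁱ ≤ 4`.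
-/

open Bornology Set Filter Topology Pointwise

section Gauge

variable {E F : Type*} [AddCommGroup E] [Module ℝ E] [AddCommGroup F] [Module ℝ F]

theorem gauge_preimage (φ : E →ₗ[ℝ] F) (s : Set F) (x : E) :
    gauge (φ ⁻¹' s) x = gauge s (φ x) := by
  simp only [gauge_def', mem_preimage, map_smul]

theorem Seminorm.le_gauge_of_forall_le_one (p : Seminorm ℝ E) {s : Set E} (hs : Absorbent ℝ s)
    (h : ∀ x ∈ s, p x ≤ 1) (x : E) : p x ≤ gauge s x := by
  refine le_of_forall_gt_imp_ge_of_dense fun r hr => ?_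
  obtain ⟨b, hb, hbr, y, hy, rfl⟩ := exists_lt_of_gauge_lt hs hr
  calc p (b • y) = b * p y := by rw [map_smul_eq_mul, Real.norm_eq_abs, abs_of_pos hb]
    _ ≤ b := mul_le_of_le_one_right hb.le (h y hy)
    _ ≤ r := hbr.le

end Gauge

section Polar

variable {𝕜 E : Type*} [NontriviallyNormedField 𝕜] [AddCommGroup E] [Module 𝕜 E]
  [TopologicalSpace E]

theorem StrongDual.isVonNBounded_polar_of_mem_nhds_zero {V : Set E} (hV : V ∈ 𝓝 0) :
    IsVonNBounded 𝕜 (StrongDual.polar 𝕜 V) := by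
  refine ContinuousLinearMap.isVonNBounded_iff.2 fun s hs => ?_
  obtain ⟨r, hr⟩ := absorbs_iff_norm.1 (hs hV)
  obtain ⟨c, hc⟩ := NormedField.exists_lt_norm 𝕜 r
  refine (NormedSpace.isVonNBounded_iff 𝕜).2 <|
    (Metric.isBounded_closedBall (x := 0) (r := ‖c‖)).subset ?_
  rintro _ ⟨T, hT, x, hx, rfl⟩
  obtain ⟨v, hv, rfl⟩ := hr c hc.le hx
  rw [mem_closedBall_zero_iff]
  change ‖T (c • v)‖ ≤ ‖c‖
  rw [map_smul, smul_eq_mul, norm_mul]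
  exact mul_le_of_le_one_right (norm_nonneg c) (hT v hv)

theorem StrongDual.polar_mem_nhds_zero_of_isVonNBounded {B : Set E} (hB : IsVonNBounded 𝕜 B) :
    StrongDual.polar 𝕜 B ∈ 𝓝 (0 : StrongDual 𝕜 E) :=
  (ContinuousLinearMap.eventually_nhds_zero_mapsTo hB (Metric.closedBall_mem_nhds 0 one_pos)).mono
    fun _ hT _ hx => mem_closedBall_zero_iff.1 (hT hx)

end Polar

theorem Seminorm.le_div_of_mem_polar_smul {E : Type*} [AddCommGroup E] [Module ℝ E]
    [TopologicalSpace E] (p : Seminorm ℝ (StrongDual ℝ E)) {V : Set E} {C : ℝ}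
    (hC : ∀ T ∈ StrongDual.polar ℝ V, p T ≤ C) {κ : ℝ} (hκ : 0 < κ) {g : StrongDual ℝ E}
    (hg : g ∈ StrongDual.polar ℝ (κ • V)) : p g ≤ C / κ := by
  have hκg : κ • g ∈ StrongDual.polar ℝ V := (StrongDual.mem_polar_iff ℝ V).2 fun x hx => by
    simpa only [smul_apply, map_smul] using
      (StrongDual.mem_polar_iff ℝ _).1 hg _ (smul_mem_smul_set hx)
  calc p g = p (κ • g) / κ := by
        rw [map_smul_eq_mul, Real.norm_eq_abs, abs_of_pos hκ, mul_div_cancel_left₀ _ hκ.ne']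
    _ ≤ C / κ := by gcongr; exact hC _ hκg

section Montel

variable {𝕜 E : Type*} [NormedField 𝕜] [AddCommGroup E] [Module 𝕜 E] [TopologicalSpace E]
  [ContinuousSMul 𝕜 E]

theorem isVonNBounded_range_of_forall_lt_mem {U : ℕ → Set E}
    (hU : ∀ W ∈ 𝓝 (0 : E), ∃ n, Absorbs 𝕜 W (U n)) {x : ℕ → E} (hx : ∀ m, ∀ n < m, x m ∈ U n) :
    IsVonNBounded 𝕜 (range x) := by
  intro W hW
  obtain ⟨n, hn⟩ := hU W hW
  have hsub : range x ⊆ x '' Iic n ∪ U n := by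
    rintro _ ⟨m, rfl⟩
    rcases le_or_gt m n with hm | hm
    · exact Or.inl (mem_image_of_mem x hm)
    · exact Or.inr (hx m n hm)
  exact (((finite_Iic n).image x).isVonNBounded hW).union hn |>.mono_right hsub

theorem exists_forall_lt_mem_imp_le [FirstCountableTopology E]
    (hHB : ∀ s : Set E, IsVonNBounded 𝕜 s → IsCompact (closure s)) {U : ℕ → Set E}
    (hUc : ∀ n, IsClosed (U n)) (hU : ∀ W ∈ 𝓝 (0 : E), ∃ n, Absorbs 𝕜 W (U n))
    {f : E → ℝ} (hf : Continuous f) {a b : ℝ} (hab : a < b) (hfa : ∀ x ∈ ⋂ n, U n, f x ≤ a) :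
    ∃ M, ∀ x, (∀ n < M, x ∈ U n) → f x ≤ b := by
  by_contra! h
  choose x hxU hxb using h
  obtain ⟨y, -, φ, hφ, hxy⟩ := (hHB _ (isVonNBounded_range_of_forall_lt_mem hU hxU)).isSeqCompact
    fun m => subset_closure (mem_range_self m)
  have hyU : y ∈ ⋂ n, U n := mem_iInter.2 fun n => (hUc n).mem_of_tendsto hxy <|
    (eventually_gt_atTop n).mono fun j hj => hxU _ n (hj.trans_le hφ.le_apply)
  have hby : b ≤ f y := ge_of_tendsto ((hf.tendsto y).comp hxy) (.of_forall fun j => (hxb _).le)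
  linarith [hfa y hyU]

end Montel

theorem StrongDual.exists_sum_eq_of_mem_polar_iInter {E : Type*} [AddCommGroup E] [Module ℝ E]
    [TopologicalSpace E] [IsTopologicalAddGroup E] [ContinuousSMul ℝ E] [LocallyConvexSpace ℝ E]
    {ι : Type*} [Fintype ι] [Nonempty ι] {U : ι → Set E} (hU : ∀ i, U i ∈ 𝓝 0)
    (hUc : ∀ i, AbsConvex ℝ (U i)) {T : StrongDual ℝ E}
    (hT : T ∈ StrongDual.polar ℝ (⋂ i, U i)) :
    ∃ g : ι → StrongDual ℝ E, ∑ i, g i = T ∧ ∀ i, g i ∈ StrongDual.polar ℝ (U i) := by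
  classical
  -- Hahn–Banach on the diagonal `Δ E ⊆ ι → E`, dominated by the gauge of `∏ i, U i`.
  set 𝒰 : Set (ι → E) := univ.pi U
  have h𝒰 : 𝒰 ∈ 𝓝 0 := set_pi_mem_nhds finite_univ fun i _ => hU i
  have h𝒰b : Balanced ℝ 𝒰 := fun a ha _ ⟨v, hv, hav⟩ i _ =>
    hav ▸ (hUc i).1 a ha (smul_mem_smul_set (hv i trivial))
  have h𝒰c : Convex ℝ 𝒰 := convex_pi fun i _ => (hUc i).2
  let q : Seminorm ℝ (ι → E) := gaugeSeminorm h𝒰b h𝒰c (absorbent_nhds_zero h𝒰)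
  let Δ : E →ₗ[ℝ] ι → E := LinearMap.pi fun _ => LinearMap.id
  have hΔ : Δ ⁻¹' 𝒰 = ⋂ i, U i := by ext; simp [𝒰, Δ]
  let f : Module.Dual ℝ (LinearMap.range Δ) :=
    (T : E →ₗ[ℝ] ℝ) ∘ₗ LinearMap.proj (Classical.arbitrary ι) ∘ₗ (LinearMap.range Δ).subtype
  have hf : ∀ v, f v ≤ q v := by
    rintro ⟨_, x, rfl⟩
    calc T x ≤ ‖T x‖ := Real.le_norm_self _
      _ ≤ gauge (⋂ i, U i) x := (T : E →ₗ[ℝ] ℝ).toSeminorm.le_gauge_of_forall_le_one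
            (absorbent_nhds_zero (iInter_mem.2 hU)) hT x
      _ = q (Δ x) := by rw [← hΔ, gauge_preimage]; rfl
  obtain ⟨g, hgf, hgq⟩ := Module.Dual.exists_continuous_extension_of_le_seminorm_real _ f
    (continuous_gauge h𝒰c h𝒰) hf
  refine ⟨fun i => g.comp (ContinuousLinearMap.single ℝ (fun _ => E) i), ?_, fun i => ?_⟩
  · ext x
    calc (∑ i, g.comp (ContinuousLinearMap.single ℝ (fun _ => E) i)) x
        = g (∑ i, Pi.single i x) := by simp [← map_sum]
      _ = g (Δ x) := congrArg g (Finset.univ_sum_single fun _ => x)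
      _ = T x := hgf ⟨Δ x, x, rfl⟩
  · refine (StrongDual.mem_polar_iff ℝ _).2 fun x hx => ?_
    have hsingle : Pi.single i x ∈ 𝒰 := fun j _ => by
      rcases eq_or_ne j i with rfl | hji
      · simpa using hx
      · simpa [hji] using mem_of_mem_nhds (hU j)
    calc ‖g (Pi.single i x)‖ ≤ q (Pi.single i x) := hgq _
      _ ≤ 1 := gauge_le_one_of_mem hsingle

theorem Seminorm.le_two_of_mem_polar_iInter_smul {E : Type*} [AddCommGroup E] [Module ℝ E]
    [TopologicalSpace E] [IsTopologicalAddGroup E] [ContinuousSMul ℝ E] [LocallyConvexSpace ℝ E]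
    (p : Seminorm ℝ (StrongDual ℝ E)) {V : ℕ → Set E} (hV : ∀ n, V n ∈ 𝓝 0)
    (hVc : ∀ n, AbsConvex ℝ (V n)) {C : ℕ → ℝ} (hCpos : ∀ n, 0 < C n)
    (hC : ∀ n, ∀ T ∈ StrongDual.polar ℝ (V n), p T ≤ C n) {M : ℕ} {T : StrongDual ℝ E}
    (hT : T ∈ StrongDual.polar ℝ (⋂ i : Fin (M + 1), (2 ^ (i : ℕ) * C i) • V i)) : p T ≤ 2 := by
  have hκ : ∀ n, 0 < 2 ^ n * C n := fun n => mul_pos (by positivity) (hCpos n)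
  obtain ⟨g, rfl, hg⟩ := StrongDual.exists_sum_eq_of_mem_polar_iInter
    (U := fun i : Fin (M + 1) => (2 ^ (i : ℕ) * C i) • V i)
    (fun i => (set_smul_mem_nhds_zero_iff (hκ i).ne').2 (hV i))
    (fun i => ⟨(hVc i).1.smul _, (hVc i).2.smul _⟩) hT
  calc p (∑ i, g i) ≤ ∑ i, p (g i) :=
        Finset.le_sum_of_subadditive p (map_zero p).le (map_add_le_add p) _ _
    _ ≤ ∑ i : Fin (M + 1), (1 / 2 : ℝ) ^ (i : ℕ) := Finset.sum_le_sum fun i _ =>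
        (p.le_div_of_mem_polar_smul (hC i) (hκ i) (hg i)).trans_eq <| by
          rw [div_mul_cancel_right₀ (hCpos i).ne', one_div_pow, one_div]
    _ ≤ 2 := by
        rw [Fin.sum_univ_eq_sum_range (fun i => (1 / 2 : ℝ) ^ i)]
        exact sum_geometric_two_le (M + 1)

theorem strong_dual_frechet_montel_bornological_general
    {E : Type*}
    [AddCommGroup E] [Module ℝ E] [UniformSpace E] [IsUniformAddGroup E]
    [FirstCountableTopology E]
    [ContinuousSMul ℝ E] [LocallyConvexSpace ℝ E]
    (hHeineBorel : ∀ s : Set E, IsVonNBounded ℝ s → IsCompact (closure s))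
    (p : Seminorm ℝ (E →L[ℝ] ℝ))
    (hp : ∀ B : Set (E →L[ℝ] ℝ), IsVonNBounded ℝ B → ∃ C : ℝ, ∀ T ∈ B, p T ≤ C) :
    Continuous p := by
  obtain ⟨V, hV, hVbasis⟩ := (nhds_hasBasis_absConvex_closed ℝ E).exists_antitone_subbasis
  have hpolar : ∀ n, ∃ C > 0, ∀ T ∈ StrongDual.polar ℝ (V n), p T ≤ C := fun n =>
    let ⟨C, hC⟩ := hp _ (StrongDual.isVonNBounded_polar_of_mem_nhds_zero (hV n).1)
    ⟨max C 1, by positivity, fun T hT => (hC T hT).trans (le_max_left _ _)⟩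
  choose C hCpos hC using hpolar
  set U : ℕ → Set E := fun n => (2 ^ n * C n) • V n
  have hU : ∀ W ∈ 𝓝 (0 : E), ∃ n, Absorbs ℝ W (U n) := fun W hW =>
    let ⟨n, hn⟩ := hVbasis.mem_iff.1 hW
    ⟨n, (Absorbs.of_norm ⟨_, fun _ => (hV n).2.2.1.smul_mono⟩).mono_left hn⟩
  have hB : IsVonNBounded ℝ (⋂ n, U n) := fun W hW =>
    let ⟨n, hn⟩ := hU W hW
    hn.mono_right (iInter_subset U n)
  refine Seminorm.continuous' (r := 4) <| mem_of_superset
    (StrongDual.polar_mem_nhds_zero_of_isVonNBounded hB) fun T hT => p.mem_closedBall_zero.2 ?_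
  obtain ⟨M, hM⟩ := exists_forall_lt_mem_imp_le hHeineBorel
    (fun n => (hV n).2.1.smul_of_ne_zero (mul_pos (by positivity) (hCpos n)).ne') hU
    (continuous_norm.comp T.continuous) one_lt_two hT
  have hT2 : (2⁻¹ : ℝ) • T ∈ StrongDual.polar ℝ (⋂ i : Fin (M + 1), U i) :=
    (StrongDual.mem_polar_iff ℝ _).2 fun x hx => by
      have : ‖T x‖ ≤ 2 := hM x fun n hn => mem_iInter.1 hx ⟨n, by omega⟩
      rw [smul_apply, norm_smul, Real.norm_eq_abs, abs_of_pos (by norm_num)]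
      linarith
  calc p T = 2 * p ((2⁻¹ : ℝ) • T) := by
        rw [map_smul_eq_mul, Real.norm_eq_abs, abs_of_pos (by norm_num),
          mul_inv_cancel_left₀ two_ne_zero]
    _ ≤ 2 * 2 := by
        gcongr
        exact p.le_two_of_mem_polar_iInter_smul (fun n => (hV n).1) (fun n => (hV n).2.2) hCpos
          hC hT2
    _ = 4 := by norm_num

/-- The strong dual of a Fréchet–Montel space is bornological: if `E` is a
Fréchet space (complete, metrizable locally convex space) which is Montel (barrelled with the
Heine–Borel property), then every seminorm on its strong dual `E'_β = (E →L[ℝ] ℝ)` (with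
the topology of uniform convergence on bounded sets) that is bounded on bounded sets is
continuous. -/
theorem strong_dual_frechet_montel_bornological
    {E : Type*}
    [AddCommGroup E] [Module ℝ E] [UniformSpace E] [IsUniformAddGroup E]
    [CompleteSpace E] [FirstCountableTopology E]
    [ContinuousSMul ℝ E] [LocallyConvexSpace ℝ E] [BarrelledSpace ℝ E]
    (hHeineBorel : ∀ s : Set E, IsVonNBounded ℝ s → IsCompact (closure s))
    (p : Seminorm ℝ (E →L[ℝ] ℝ))
    (hp : ∀ B : Set (E →L[ℝ] ℝ), IsVonNBounded ℝ B → ∃ C : ℝ, ∀ T ∈ B, p T ≤ C) :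
    Continuous p :=
  strong_dual_frechet_montel_bornological_general hHeineBorel p hp
end
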